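/- Fix an integer k ≥ 1 and define L : ℝ² → ℝ in polar coordinates by L(r cos θ, r sin θ) = r² cos(kθ), i.e., identifying ℝ² with ℂ, L(z) = Re(z^k)·|z|^{2−k} for z ≠ 0 and L(0) = 0. Then the open set {z ∈ ℝ² : L(z) < 0} has exactly k connected components. -/

import Mathlib

/-!
Away from the origin `L` has the sign of `Re (z ^ k) = ‖z‖ ^ k * cos (k * arg z)`, so `{L < 0}` is
the union of the `k` open sectors of half-angle `π / (2k)` around the rays of angle `(2j + 1)π / k`,
`j < k`. These sectors are convex, hence connected, and pairwise disjoint; the components of a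
space covered by disjoint nonempty open connected sets are exactly those sets.
-/

open Real Complex Set Function

namespace Real

theorem abs_sub_round_div_mul_le {c : ℝ} (hc : 0 < c) (x : ℝ) :
    |x - round (x / c) * c| ≤ c / 2 := by
  have h := abs_sub_round (x / c)
  rw [show x - round (x / c) * c = c * (x / c - round (x / c)) by field_simp, abs_mul,
    abs_of_pos hc]
  nlinarith

theorem cos_lt_cos_iff_exists_abs_sub_lt {β x : ℝ} (hβ0 : 0 ≤ β) (hβ : β ≤ π) :
    cos β < cos x ↔ ∃ n : ℤ, |x - n * (2 * π)| < β := by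
  have key : ∀ n : ℤ, |x - n * (2 * π)| ≤ π → (cos β < cos x ↔ |x - n * (2 * π)| < β) := by
    intro n hn
    rw [← cos_sub_int_mul_two_pi x n, ← cos_abs (x - _)]
    exact strictAntiOn_cos.lt_iff_gt ⟨hβ0, hβ⟩ ⟨abs_nonneg _, hn⟩
  refine ⟨fun h => ?_, fun ⟨n, hn⟩ => (key n (hn.le.trans hβ)).2 hn⟩
  have hround := abs_sub_round_div_mul_le (by positivity : 0 < 2 * π) x
  rw [mul_div_cancel_left₀ π two_ne_zero] at hround
  exact ⟨_, (key _ hround).1 h⟩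

theorem pi_div_two_mul_le_pi_div_two {k : ℕ} (hk : 0 < k) : π / (2 * k) ≤ π / 2 :=
  div_le_div_of_nonneg_left pi_pos.le two_pos (by linarith [(Nat.one_le_cast (α := ℝ)).2 hk])

end Real

theorem Int.eq_of_abs_sub_mul_lt {c x : ℝ} {m n : ℤ} (hm : |x - m * c| < c / 2)
    (hn : |x - n * c| < c / 2) : m = n := by
  have hc : 0 < c := by linarith [abs_nonneg (x - m * c)]
  have h : |((m - n : ℤ) : ℝ) * c| < c :=
    calc |((m - n : ℤ) : ℝ) * c| = |(x - n * c) - (x - m * c)| := by push_cast; ring_nf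
      _ ≤ |x - n * c| + |x - m * c| := abs_sub _ _
      _ < c := by linarith
  rw [abs_mul, abs_of_pos hc, mul_lt_iff_lt_one_left hc, ← Int.cast_abs, ← Int.cast_one,
    Int.cast_lt, Int.abs_lt_one_iff, sub_eq_zero] at h
  exact h

section DisjointOpenCover

variable {X ι : Type*} [TopologicalSpace X] {A : ι → Set X}

theorem isClopen_of_disjoint_isOpen_iUnion_eq_univ (hopen : ∀ i, IsOpen (A i))
    (hdisj : Pairwise (Disjoint on A)) (hcover : ⋃ i, A i = univ) (i : ι) : IsClopen (A i) := by
  refine ⟨?_, hopen i⟩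
  rw [← isOpen_compl_iff, compl_eq_univ_sdiff, ← hcover, iUnion_sdiff]
  refine isOpen_iUnion fun j => ?_
  rcases eq_or_ne i j with rfl | hij
  · simp
  · simpa only [(hdisj hij.symm).sdiff_eq_left] using hopen j

theorem Nat.card_connectedComponents_of_disjoint_isOpen_iUnion_eq_univ
    (hopen : ∀ i, IsOpen (A i)) (hconn : ∀ i, IsConnected (A i))
    (hdisj : Pairwise (Disjoint on A)) (hcover : ⋃ i, A i = univ) :
    Nat.card (ConnectedComponents X) = Nat.card ι := by
  choose x hx using fun i => (hconn i).nonempty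
  refine (Nat.card_eq_of_bijective (fun i => (x i : ConnectedComponents X))
    ⟨fun i j hij => ?_, fun c => ?_⟩).symm
  · have hxi : x i ∈ A j :=
      (isClopen_of_disjoint_isOpen_iUnion_eq_univ hopen hdisj hcover j).connectedComponent_subset
        (hx j) (ConnectedComponents.coe_eq_coe'.1 hij)
    by_contra hne
    exact disjoint_left.1 (hdisj hne) (hx i) hxi
  · obtain ⟨y, rfl⟩ := ConnectedComponents.surjective_coe c
    obtain ⟨i, hi⟩ := mem_iUnion.1 (hcover.symm ▸ mem_univ y)
    exact ⟨i, ConnectedComponents.coe_eq_coe'.2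
      ((hconn i).isPreconnected.subset_connectedComponent hi (hx i))⟩

theorem Nat.card_connectedComponents_of_eq_iUnion {U : Set X} (hU : U = ⋃ i, A i)
    (hopen : ∀ i, IsOpen (A i)) (hconn : ∀ i, IsConnected (A i))
    (hdisj : Pairwise (Disjoint on A)) :
    Nat.card (ConnectedComponents U) = Nat.card ι := by
  have hAU : ∀ i, A i ⊆ U := fun i => hU ▸ subset_iUnion A i
  refine Nat.card_connectedComponents_of_disjoint_isOpen_iUnion_eq_univ
    (A := fun i => ((↑) : U → X) ⁻¹' A i) (fun i => (hopen i).preimage continuous_subtype_val)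
    (fun i => ?_) (fun i j hij => (hdisj hij).preimage _) ?_
  · have hpre : IsPreconnected (((↑) : U → X) ⁻¹' A i) := by
      rw [← Topology.IsInducing.subtypeVal.isPreconnected_image,
        image_preimage_eq_of_subset (by simpa using hAU i)]
      exact (hconn i).isPreconnected
    obtain ⟨y, hy⟩ := (hconn i).nonempty
    exact ⟨⟨⟨y, hAU i hy⟩, hy⟩, hpre⟩
  · rw [← preimage_iUnion, ← hU, Subtype.coe_preimage_self]

end DisjointOpenCover

namespace Complex

theorem re_ofReal_mul_exp_mul_I (r t : ℝ) : (r * exp (t * I)).re = r * Real.cos t := by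
  rw [re_ofReal_mul, exp_ofReal_mul_I_re]

theorem re_pow_eq (z : ℂ) (k : ℕ) : (z ^ k).re = ‖z‖ ^ k * Real.cos (k * arg z) := by
  conv_lhs => rw [← norm_mul_exp_arg_mul_I z]
  rw [mul_pow, ← exp_nat_mul, ← ofReal_pow, ← re_ofReal_mul_exp_mul_I]
  push_cast
  ring_nf

theorem re_exp_neg_mul_I_mul (θ : ℝ) (z : ℂ) :
    (exp (-θ * I) * z).re = ‖z‖ * Real.cos (arg z - θ) := by
  conv_lhs => rw [← norm_mul_exp_arg_mul_I z]
  rw [← re_ofReal_mul_exp_mul_I, mul_left_comm, ← exp_add]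
  push_cast
  ring_nf

theorem re_pow_neg_iff {z : ℂ} (hz : z ≠ 0) (k : ℕ) :
    (z ^ k).re < 0 ↔ ∃ n : ℤ, |k * arg z - π - n * (2 * π)| < π / 2 := by
  rw [re_pow_eq]
  refine (smul_neg_iff_of_pos_left (pow_pos (norm_pos_iff.2 hz) k)).trans ?_
  rw [← neg_pos, ← Real.cos_sub_pi, ← Real.cos_pi_div_two,
    Real.cos_lt_cos_iff_exists_abs_sub_lt (by positivity) (by linarith [pi_pos])]

/-- The open cone of directions within angle `β` of `exp (θ * I)`, written so that it is
visibly open and, when `0 ≤ cos β`, convex. -/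
def sector (θ β : ℝ) : Set ℂ := {z | Real.cos β * ‖z‖ < (exp (-θ * I) * z).re}

theorem isOpen_sector (θ β : ℝ) : IsOpen (sector θ β) :=
  isOpen_lt (by fun_prop) (by fun_prop)

theorem convex_sector (θ : ℝ) {β : ℝ} (hβ : 0 ≤ Real.cos β) : Convex ℝ (sector θ β) := by
  have h := ((convexOn_norm convex_univ).smul hβ).sub
    ((reLm.comp (LinearMap.mulLeft ℝ (exp (-θ * I)))).concaveOn convex_univ)
  simpa [sector, sub_neg] using h.convex_lt 0

theorem zero_notMem_sector (θ β : ℝ) : (0 : ℂ) ∉ sector θ β := by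
  simp [sector]

theorem exp_mul_I_mem_sector (θ : ℝ) {β : ℝ} (hβ0 : 0 < β) (hβ : β ≤ π) :
    exp (θ * I) ∈ sector θ β := by
  have := strictAntiOn_cos ⟨le_rfl, pi_pos.le⟩ ⟨hβ0.le, hβ⟩ hβ0
  rw [sector, mem_ofPred_eq, ← exp_add, neg_mul, neg_add_cancel, exp_zero,
    norm_exp_ofReal_mul_I]
  simpa using this

theorem isConnected_sector (θ : ℝ) {β : ℝ} (hβ0 : 0 < β) (hβ : β ≤ π / 2) :
    IsConnected (sector θ β) :=
  (convex_sector θ (cos_nonneg_of_mem_Icc ⟨by linarith, hβ⟩)).isConnected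
    ⟨_, exp_mul_I_mem_sector θ hβ0 (by linarith [pi_pos])⟩

theorem mem_sector_iff {z : ℂ} (hz : z ≠ 0) (θ : ℝ) {β : ℝ} (hβ0 : 0 ≤ β) (hβ : β ≤ π) :
    z ∈ sector θ β ↔ ∃ n : ℤ, |arg z - θ - n * (2 * π)| < β := by
  rw [sector, mem_ofPred_eq, re_exp_neg_mul_I_mul, mul_comm,
    mul_lt_mul_iff_right₀ (norm_pos_iff.2 hz), Real.cos_lt_cos_iff_exists_abs_sub_lt hβ0 hβ]

/-- Directions within `π / (2k)` of the ray at angle `(2j + 1)π / k`, along which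
`cos (kθ) = -1`. -/
def timelikeSector (k j : ℕ) : Set ℂ := sector ((2 * j + 1) * π / k) (π / (2 * k))

theorem isConnected_timelikeSector {k : ℕ} (hk : 0 < k) (j : ℕ) :
    IsConnected (timelikeSector k j) :=
  isConnected_sector _ (by positivity) (pi_div_two_mul_le_pi_div_two hk)

theorem mem_timelikeSector_iff {k : ℕ} (hk : 0 < k) {z : ℂ} (hz : z ≠ 0) (j : ℕ) :
    z ∈ timelikeSector k j ↔
      ∃ q : ℤ, |k * arg z - π - ((q * k + j : ℤ) : ℝ) * (2 * π)| < π / 2 := by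
  have hk' : (0 : ℝ) < k := Nat.cast_pos.2 hk
  rw [timelikeSector, mem_sector_iff hz _ (by positivity)
    ((pi_div_two_mul_le_pi_div_two hk).trans (half_le_self pi_pos.le))]
  refine exists_congr fun q => ?_
  rw [show k * arg z - π - ((q * k + j : ℤ) : ℝ) * (2 * π)
      = k * (arg z - (2 * j + 1) * π / k - q * (2 * π)) by push_cast; field_simp; ring,
    abs_mul, abs_of_pos hk', ← lt_div_iff₀' hk', div_div, mul_comm 2]

theorem re_pow_neg_iff_exists_mem_timelikeSector {k : ℕ} (hk : 0 < k) (z : ℂ) :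
    (z ^ k).re < 0 ↔ ∃ j : Fin k, z ∈ timelikeSector k j := by
  rcases eq_or_ne z 0 with rfl | hz
  · simp [zero_pow hk.ne', timelikeSector, zero_notMem_sector]
  have := NeZero.of_pos hk
  rw [re_pow_neg_iff hz, (Int.divModEquiv k).exists_congr_left, Prod.exists, exists_comm]
  simp only [mem_timelikeSector_iff hk hz, Int.divModEquiv_symm_apply]

theorem pairwise_disjoint_timelikeSector {k : ℕ} (hk : 0 < k) :
    Pairwise (Disjoint on fun j : Fin k => timelikeSector k j) := by
  have := NeZero.of_pos hk
  intro i j hij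
  refine disjoint_left.2 fun z hi hj => hij ?_
  have hz : z ≠ 0 := ne_of_mem_of_not_mem hi (zero_notMem_sector _ _)
  obtain ⟨q, hq⟩ := (mem_timelikeSector_iff hk hz i).1 hi
  obtain ⟨q', hq'⟩ := (mem_timelikeSector_iff hk hz j).1 hj
  have hqq' := Int.eq_of_abs_sub_mul_lt (hq.trans (by linarith [pi_pos]))
    (hq'.trans (by linarith [pi_pos]))
  have := (Int.divModEquiv k).symm.injective (a₁ := (q, i)) (a₂ := (q', j)) (by simpa using hqq')
  exact (Prod.ext_iff.1 this).2

end Complex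

theorem beem_example_timelike_components (k : ℕ) (hk : 1 ≤ k)
    (L : ℂ → ℝ)
    (hL0 : L 0 = 0)
    (hL : ∀ z : ℂ, z ≠ 0 → L z = (z ^ k).re * ‖z‖ ^ ((2 : ℝ) - k)) :
    Nat.card (ConnectedComponents {z : ℂ // L z < 0}) = k := by
  have hL_neg : ∀ z, L z < 0 ↔ (z ^ k).re < 0 := by
    intro z
    rcases eq_or_ne z 0 with rfl | hz
    · simp [hL0, zero_pow (Nat.one_le_iff_ne_zero.1 hk)]
    · rw [hL z hz, mul_comm]
      exact smul_neg_iff_of_pos_left (rpow_pos_of_pos (norm_pos_iff.2 hz) _)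
  have hU : {z | L z < 0} = ⋃ j : Fin k, timelikeSector k j := by
    ext z
    rw [mem_ofPred_eq, mem_iUnion, hL_neg, re_pow_neg_iff_exists_mem_timelikeSector hk]
  exact (Nat.card_connectedComponents_of_eq_iUnion hU (fun _ => isOpen_sector _ _)
    (fun j => isConnected_timelikeSector hk j) (pairwise_disjoint_timelikeSector hk)).trans
    (Nat.card_fin k)
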